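/- (Theorem 4) Let R_1, …, R_K be M×M complex Hermitian positive semidefinite matrices, let ρᵖ > 0, τ > 0, ρᵗ > 0, and set c = 1/(ρᵖτ). For a pilot assignment π : {1,…,K} → {1,…,τ′} define C_{π_k}(π) = Σ_{ℓ : π_ℓ = π_k} R_ℓ + c·I, D(π) = Σ_{k=1}^{K} (R_k − R_k·C_{π_k}(π)⁻¹·R_k) + (1/ρᵗ)·I, and the K×K matrix Ω(π) with entries Ω(π)_{ij} = trace(C_{π_i}(π)⁻¹·R_i·D(π)⁻¹·R_j)·δ(π_i − π_j). Define ω_i = trace((R_i + c·I)⁻¹·R_i·[Σ_{k=1}^{K}(R_k − R_k·(R_k + c·I)⁻¹·R_k) + (1/ρᵗ)·I]⁻¹·R_i). Then for every pilot assignment π the matrix Ω(π) is Hermitian positive semidefinite and trace((I_K + Ω(π))⁻¹) ≥ Σ_{i=1}^{K} 1/(1 + ω_i); moreover, if trace(R_i·R_j) = 0 for all i ≠ j with π_i = π_j, then equality holds. -/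

import Mathlib

/-!
Write `Q_k = R_k + cI`. Since `Q_k ≤ C_{π_k}(π)` in the Loewner order, inversion (which is
antitone) and the Schur-complement bound `R - R C⁻¹ R ≥ 0` give `D₀ ≤ D(π)`, where `D₀` is `D`
with every `C_{π_k}(π)` replaced by `Q_k`. Both `C⁻¹` and `D⁻¹` enter
`Ω(π)_ii = tr(C⁻¹ R_i D⁻¹ R_i)` antitonically, so `Ω(π)_ii ≤ ω_i`; combined with
`((I + Ω)⁻¹)_ii ≥ 1 / (1 + Ω_ii)` this gives the bound. `Ω(π)` is positive semidefinite because
each pilot block is a Gram matrix `tr(P R_i Q R_j)` with `P, Q ≥ 0`. If `tr(R_i R_j) = 0`, then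
`R_i R_j = 0`, hence `C_{π_k}(π)⁻¹ R_k = Q_k⁻¹ R_k`, `D(π) = D₀`, and `Ω(π)` is the diagonal
matrix of the `ω_i`.
-/

open scoped ComplexOrder MatrixOrder
open Matrix

namespace Matrix

variable {𝕜 n : Type*} [RCLike 𝕜] [Fintype n] [DecidableEq n]

theorem PosDef.inv_le_inv {A B : Matrix n n 𝕜} (hA : A.PosDef) (hB : B.PosDef) (hAB : A ≤ B) :
    B⁻¹ ≤ A⁻¹ := by
  have := hA.isUnit.invertible
  have := hB.isUnit.invertible
  have key : A⁻¹ - B⁻¹ = (A⁻¹ - B⁻¹)ᴴ * A * (A⁻¹ - B⁻¹) + B⁻¹ᴴ * (B - A) * B⁻¹ := by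
    rw [conjTranspose_sub, hA.inv.isHermitian.eq, hB.inv.isHermitian.eq]
    simp [mul_sub, sub_mul, Matrix.mul_assoc]
  rw [le_iff, key]
  exact (hA.posSemidef.conjTranspose_mul_mul_same _).add (hAB.conjTranspose_mul_mul_same _)

theorem PosSemidef.sub_mul_inv_mul_of_le {R C : Matrix n n 𝕜} (hR : R.PosSemidef) (hC : C.PosDef)
    (hRC : R ≤ C) : (R - R * C⁻¹ * R).PosSemidef := by
  have := hC.isUnit.invertible
  have key : R - R * C⁻¹ * R =
      (C⁻¹ * R)ᴴ * (C - R) * (C⁻¹ * R) + (1 - C⁻¹ * R)ᴴ * R * (1 - C⁻¹ * R) := by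
    rw [conjTranspose_sub, conjTranspose_mul, conjTranspose_one, hR.isHermitian.eq,
      hC.inv.isHermitian.eq]
    simp [mul_sub, sub_mul, Matrix.mul_assoc]
  rw [key]
  exact (hRC.conjTranspose_mul_mul_same _).add (hR.conjTranspose_mul_mul_same _)

theorem PosDef.one_div_le_inv_apply_self {A : Matrix n n 𝕜} (hA : A.PosDef) (i : n) :
    1 / A i i ≤ A⁻¹ i i := by
  have := hA.isUnit.invertible
  have ha : A i i ≠ 0 := hA.diag_pos.ne'
  set E := single i i (A i i)⁻¹
  have hE : Eᴴ = E := by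
    rw [conjTranspose_single, star_inv₀, hA.isHermitian.apply i i]
  have hEAE : E * A * E = E := by
    rw [single_mul_mul_single, inv_mul_cancel₀ ha, one_mul]
  have key : A⁻¹ - E = (A⁻¹ - E)ᴴ * A * (A⁻¹ - E) := by
    rw [conjTranspose_sub, hA.inv.isHermitian.eq, hE]
    simp only [sub_mul, mul_sub, hEAE, inv_mul_of_invertible, Matrix.one_mul,
      Matrix.mul_assoc, mul_inv_of_invertible, Matrix.mul_one]
    abel
  have hY : 0 ≤ (A⁻¹ - E) i i := (key ▸ hA.posSemidef.conjTranspose_mul_mul_same _).diag_nonneg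
  simpa [E, sub_nonneg] using hY

theorem PosSemidef.trace_mul_eq_trace_conjTranspose_mul_self {A B : Matrix n n 𝕜}
    (hA : A.PosSemidef) (hB : B.PosSemidef) :
    (A * B).trace = ((CFC.sqrt B * CFC.sqrt A)ᴴ * (CFC.sqrt B * CFC.sqrt A)).trace := by
  have hsA : (CFC.sqrt A)ᴴ = CFC.sqrt A := (CFC.sqrt_nonneg A).posSemidef.isHermitian.eq
  have hsB : (CFC.sqrt B)ᴴ = CFC.sqrt B := (CFC.sqrt_nonneg B).posSemidef.isHermitian.eq
  rw [conjTranspose_mul, hsA, hsB]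
  calc (A * B).trace = (CFC.sqrt A * CFC.sqrt A * (CFC.sqrt B * CFC.sqrt B)).trace := by
        rw [CFC.sqrt_mul_sqrt_self A hA.nonneg, CFC.sqrt_mul_sqrt_self B hB.nonneg]
    _ = _ := by rw [Matrix.mul_assoc, trace_mul_comm]; simp only [Matrix.mul_assoc]

theorem PosSemidef.trace_mul_nonneg {A B : Matrix n n 𝕜} (hA : A.PosSemidef)
    (hB : B.PosSemidef) : 0 ≤ (A * B).trace := by
  rw [hA.trace_mul_eq_trace_conjTranspose_mul_self hB]
  exact (posSemidef_conjTranspose_mul_self _).trace_nonneg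

theorem PosSemidef.mul_eq_zero_of_trace_mul_eq_zero {A B : Matrix n n 𝕜} (hA : A.PosSemidef)
    (hB : B.PosSemidef) (h : (A * B).trace = 0) : A * B = 0 := by
  rw [hA.trace_mul_eq_trace_conjTranspose_mul_self hB,
    trace_conjTranspose_mul_self_eq_zero_iff] at h
  have hBA : B * A = 0 := calc
    B * A = CFC.sqrt B * (CFC.sqrt B * CFC.sqrt A) * CFC.sqrt A := by
      rw [← Matrix.mul_assoc, Matrix.mul_assoc _ _ (CFC.sqrt A), CFC.sqrt_mul_sqrt_self A hA.nonneg,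
        CFC.sqrt_mul_sqrt_self B hB.nonneg]
    _ = 0 := by rw [h, Matrix.mul_zero, Matrix.zero_mul]
  rw [← hA.isHermitian.eq, ← hB.isHermitian.eq, ← conjTranspose_mul, hBA, conjTranspose_zero]

theorem PosSemidef.trace_mul_mul_mul_self_nonneg {P Q V : Matrix n n 𝕜} (hP : P.PosSemidef)
    (hQ : Q.PosSemidef) (hV : V.IsHermitian) : 0 ≤ (P * V * Q * V).trace := by
  have hVQV := hQ.conjTranspose_mul_mul_same V
  rw [hV.eq] at hVQV
  simpa only [Matrix.mul_assoc] using hP.trace_mul_nonneg hVQV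

theorem PosSemidef.trace_mul_mul_mul_self_le {P P' Q Q' V : Matrix n n 𝕜} (hP' : P'.PosSemidef)
    (hQ : Q.PosSemidef) (hPP' : P ≤ P') (hQQ' : Q ≤ Q') (hV : V.IsHermitian) :
    (P * V * Q * V).trace ≤ (P' * V * Q' * V).trace := by
  calc (P * V * Q * V).trace ≤ (P' * V * Q * V).trace := by
        rw [← sub_nonneg, ← trace_sub, ← sub_mul, ← sub_mul, ← sub_mul]
        exact (le_iff.mp hPP').trace_mul_mul_mul_self_nonneg hQ hV
    _ ≤ (P' * V * Q' * V).trace := by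
        rw [← sub_nonneg, ← trace_sub, ← sub_mul, ← mul_sub]
        exact hP'.trace_mul_mul_mul_self_nonneg (le_iff.mp hQQ') hV

theorem posSemidef_of_trace_mul_mul_mul {ι : Type*} [Fintype ι] {P Q : Matrix n n 𝕜}
    (hP : P.PosSemidef) (hQ : Q.PosSemidef) {V : ι → Matrix n n 𝕜} (hV : ∀ i, (V i).IsHermitian) :
    (of fun i j => (P * V i * Q * V j).trace).PosSemidef := by
  refine .of_dotProduct_mulVec_nonneg ?_ fun x => ?_
  · ext i j
    rw [conjTranspose_apply, of_apply, of_apply, ← trace_conjTranspose]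
    simp only [conjTranspose_mul, (hV _).eq, hP.isHermitian.eq, hQ.isHermitian.eq,
      ← Matrix.mul_assoc]
    exact (trace_mul_comm _ P).trans (by simp only [Matrix.mul_assoc])
  · set Y := ∑ j, x j • V j
    have hY : Yᴴ = ∑ i, star (x i) • V i := by
      simp only [Y, conjTranspose_sum, conjTranspose_smul, (hV _).eq]
    have hquad : star x ⬝ᵥ (of fun i j => (P * V i * Q * V j).trace) *ᵥ x =
        (P * (Yᴴ * Q * Y)).trace := by
      rw [hY]
      simp only [Y, dotProduct, mulVec, of_apply, Finset.mul_sum, Finset.sum_mul, Matrix.smul_mul,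
        Matrix.mul_smul, trace_sum, trace_smul, smul_eq_mul, Pi.star_apply]
      rw [Finset.sum_comm]
      refine Finset.sum_congr rfl fun i _ => Finset.sum_congr rfl fun j _ => ?_
      simp only [Matrix.mul_assoc]
      ring
    rw [hquad]
    exact hP.trace_mul_nonneg (hQ.conjTranspose_mul_mul_same Y)

theorem posSemidef_of_ite_trace_mul_mul_mul {ι γ : Type*} [Fintype ι] [Fintype γ] [DecidableEq γ]
    {P : γ → Matrix n n 𝕜} (hP : ∀ g, (P g).PosSemidef) {Q : Matrix n n 𝕜} (hQ : Q.PosSemidef)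
    {V : ι → Matrix n n 𝕜} (hV : ∀ i, (V i).IsHermitian) (π : ι → γ) :
    (of fun i j => if π i = π j then (P (π i) * V i * Q * V j).trace else 0).PosSemidef := by
  have hsum : (of fun i j => if π i = π j then (P (π i) * V i * Q * V j).trace else 0) =
      ∑ g, of fun i j =>
        (P g * (if π i = g then V i else 0) * Q * (if π j = g then V j else 0)).trace := by
    ext i j
    rw [sum_apply, Finset.sum_eq_single (π i)]
    · by_cases h : π i = π j <;> simp [h, eq_comm]
    · intro g _ hg
      simp [Ne.symm hg]
    · simp
  rw [hsum]
  refine posSemidef_sum _ fun g _ => posSemidef_of_trace_mul_mul_mul (hP g) hQ fun i => ?_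
  split_ifs
  exacts [hV i, isHermitian_zero]

theorem PosSemidef.sum_one_div_one_add_le_trace_inv {A : Matrix n n 𝕜} (hA : A.PosSemidef)
    {w : n → 𝕜} (hw : ∀ i, A i i ≤ w i) : ∑ i, 1 / (1 + w i) ≤ ((1 + A)⁻¹).trace := by
  have h1A : (1 + A).PosDef := PosDef.one.add_posSemidef hA
  refine Finset.sum_le_sum fun i _ => ?_
  calc 1 / (1 + w i) ≤ 1 / (1 + A) i i := by
        refine one_div_le_one_div_of_le h1A.diag_pos ?_
        simpa using add_le_add_right (hw i) 1
    _ ≤ (1 + A)⁻¹ i i := h1A.one_div_le_inv_apply_self i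

end Matrix

section Resolvent

variable {α n : Type*} [CommRing α] [Fintype n] [DecidableEq n]

theorem Commute.nonsing_inv_left {A B : Matrix n n α} (h : Commute A B) : Commute A⁻¹ B := by
  by_cases hA : IsUnit A.det
  · have := A.invertibleOfIsUnitDet hA
    simpa only [Matrix.invOf_eq_nonsing_inv] using h.invOf_left
  · rw [Matrix.nonsing_inv_apply_not_isUnit A hA]
    exact Commute.zero_left B

theorem Matrix.inv_mul_eq_inv_mul_of_sub_mul_eq_zero {C Q R : Matrix n n α} [Invertible C]
    [Invertible Q] (hQR : Commute Q R) (h : (C - Q) * R = 0) : C⁻¹ * R = Q⁻¹ * R := by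
  have hC : C * (Q⁻¹ * R) = R := by
    rw [hQR.nonsing_inv_left.eq, ← sub_add_cancel C Q, add_mul, ← Matrix.mul_assoc, h,
      Matrix.zero_mul, zero_add, ← hQR.nonsing_inv_left.eq,
      Matrix.mul_inv_cancel_left_of_invertible]
  conv_lhs => rw [← hC]
  exact Matrix.inv_mul_cancel_left_of_invertible _ _

end Resolvent

theorem Matrix.trace_inv_one_add_diagonal {n K : Type*} [Fintype n] [DecidableEq n] [Field K]
    {w : n → K} (hw : ∀ i, 1 + w i ≠ 0) : ((1 + diagonal w)⁻¹).trace = ∑ i, 1 / (1 + w i) := by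
  have hinv : (1 + diagonal w)⁻¹ = diagonal fun i => 1 / (1 + w i) := by
    refine inv_eq_right_inv ?_
    rw [← diagonal_one, diagonal_add, diagonal_mul_diagonal]
    simp [hw]
  rw [hinv, trace_diagonal]

section ScalarShift

variable {m : Type*} [DecidableEq m]

theorem posDef_smul_one {c : ℝ} (hc : 0 < c) : ((c : ℂ) • (1 : Matrix m m ℂ)).PosDef :=
  PosDef.one.smul (Complex.zero_lt_real.mpr hc)

theorem le_add_smul_one (A : Matrix m m ℂ) {c : ℝ} (hc : 0 < c) : A ≤ A + (c : ℂ) • 1 :=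
  le_add_of_nonneg_right (posDef_smul_one hc).posSemidef.nonneg

theorem commute_add_smul_one_self [Fintype m] (A : Matrix m m ℂ) (c : ℂ) : Commute (A + c • 1) A :=
  (Commute.refl A).add_left ((Commute.one_left A).smul_left c)

theorem Matrix.PosSemidef.posDef_add_smul_one {A : Matrix m m ℂ} (hA : A.PosSemidef) {c : ℝ}
    (hc : 0 < c) : (A + (c : ℂ) • 1).PosDef :=
  PosDef.posSemidef_add hA (posDef_smul_one hc)

end ScalarShift

section PilotContamination

variable {m ι γ : Type*} [DecidableEq m] [Fintype ι] [DecidableEq γ]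

/-- `C_g(π)`; the paper's `C_{π_k}(π)` is `pilotObsCov R π c (π k)`. -/
noncomputable def pilotObsCov (R : ι → Matrix m m ℂ) (π : ι → γ) (c : ℝ) (g : γ) :
    Matrix m m ℂ :=
  ∑ ℓ ∈ Finset.univ.filter (fun ℓ => π ℓ = g), R ℓ + (c : ℂ) • 1

/-- `D(π)` is `effNoiseCov R (fun k => pilotObsCov R π c (π k)) (1 / ρᵗ)`. -/
noncomputable def effNoiseCov [Fintype m] (R C : ι → Matrix m m ℂ) (σ : ℝ) : Matrix m m ℂ :=
  ∑ k, (R k - R k * (C k)⁻¹ * R k) + (σ : ℂ) • 1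

/-- `Ω(π)`, with `σ = 1 / ρᵗ`. -/
noncomputable def omegaMatrix [Fintype m] (R : ι → Matrix m m ℂ) (π : ι → γ) (c σ : ℝ) :
    Matrix ι ι ℂ :=
  of fun i j => if π i = π j then
    ((pilotObsCov R π c (π i))⁻¹ * R i *
      (effNoiseCov R (fun k => pilotObsCov R π c (π k)) σ)⁻¹ * R j).trace
  else 0

variable {R : ι → Matrix m m ℂ}

theorem pilotObsCov_sub_add_smul_one [DecidableEq ι] (R : ι → Matrix m m ℂ) (π : ι → γ)
    (c : ℝ) (k : ι) :
    pilotObsCov R π c (π k) - (R k + (c : ℂ) • 1) =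
      ∑ ℓ ∈ (Finset.univ.filter fun ℓ => π ℓ = π k).erase k, R ℓ := by
  rw [pilotObsCov, ← Finset.add_sum_erase _ _ (by simp : k ∈ Finset.univ.filter _)]
  abel

theorem add_smul_one_le_pilotObsCov [DecidableEq ι] (hR : ∀ k, (R k).PosSemidef) (π : ι → γ)
    (c : ℝ) (k : ι) : R k + (c : ℂ) • 1 ≤ pilotObsCov R π c (π k) := by
  rw [le_iff, pilotObsCov_sub_add_smul_one]
  exact posSemidef_sum _ fun ℓ _ => hR ℓ

theorem posDef_pilotObsCov (hR : ∀ k, (R k).PosSemidef) (π : ι → γ) {c : ℝ} (hc : 0 < c)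
    (g : γ) : (pilotObsCov R π c g).PosDef :=
  (posSemidef_sum _ fun ℓ _ => hR ℓ).posDef_add_smul_one hc

theorem posDef_effNoiseCov [Fintype m] {C : ι → Matrix m m ℂ} (hR : ∀ k, (R k).PosSemidef)
    (hC : ∀ k, (C k).PosDef) (hRC : ∀ k, R k ≤ C k) {σ : ℝ} (hσ : 0 < σ) :
    (effNoiseCov R C σ).PosDef :=
  PosDef.posSemidef_add (posSemidef_sum _ fun k _ => (hR k).sub_mul_inv_mul_of_le (hC k) (hRC k))
    (posDef_smul_one hσ)

theorem effNoiseCov_mono [Fintype m] {Q C : ι → Matrix m m ℂ} (hR : ∀ k, (R k).IsHermitian)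
    (hQ : ∀ k, (Q k).PosDef) (hC : ∀ k, (C k).PosDef) (hQC : ∀ k, Q k ≤ C k) (σ : ℝ) :
    effNoiseCov R Q σ ≤ effNoiseCov R C σ := by
  rw [le_iff, effNoiseCov, effNoiseCov, add_sub_add_right_eq_sub, ← Finset.sum_sub_distrib]
  refine posSemidef_sum _ fun k _ => ?_
  have h := (le_iff.mp ((hQ k).inv_le_inv (hC k) (hQC k))).conjTranspose_mul_mul_same (R k)
  rw [(hR k).eq] at h
  convert h using 1
  noncomm_ring

theorem posDef_effNoiseCov_pilotObsCov [Fintype m] [DecidableEq ι] (hR : ∀ k, (R k).PosSemidef)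
    (π : ι → γ) {c σ : ℝ} (hc : 0 < c) (hσ : 0 < σ) :
    (effNoiseCov R (fun k => pilotObsCov R π c (π k)) σ).PosDef :=
  posDef_effNoiseCov hR (fun k => posDef_pilotObsCov hR π hc (π k))
    (fun k => (le_add_smul_one (R k) hc).trans (add_smul_one_le_pilotObsCov hR π c k)) hσ

theorem posSemidef_omegaMatrix [Fintype m] [Fintype γ] [DecidableEq ι]
    (hR : ∀ k, (R k).PosSemidef) (π : ι → γ) {c σ : ℝ} (hc : 0 < c) (hσ : 0 < σ) :
    (omegaMatrix R π c σ).PosSemidef :=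
  posSemidef_of_ite_trace_mul_mul_mul (fun g => (posDef_pilotObsCov hR π hc g).inv.posSemidef)
    (posDef_effNoiseCov_pilotObsCov hR π hc hσ).inv.posSemidef (fun i => (hR i).isHermitian) π

theorem omegaMatrix_apply_self_le [Fintype m] [DecidableEq ι] (hR : ∀ k, (R k).PosSemidef)
    (π : ι → γ) {c σ : ℝ} (hc : 0 < c) (hσ : 0 < σ) (i : ι) :
    omegaMatrix R π c σ i i ≤ ((R i + (c : ℂ) • 1)⁻¹ * R i *
      (effNoiseCov R (fun k => R k + (c : ℂ) • 1) σ)⁻¹ * R i).trace := by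
  have hQ k := (hR k).posDef_add_smul_one hc
  have hQC := add_smul_one_le_pilotObsCov hR π c
  have hC k := posDef_pilotObsCov hR π hc (π k)
  have hD := posDef_effNoiseCov_pilotObsCov hR π hc hσ
  have hD₀ := posDef_effNoiseCov hR hQ (fun k => le_add_smul_one (R k) hc) hσ
  have hD₀D := effNoiseCov_mono (fun k => (hR k).isHermitian) hQ hC hQC σ
  rw [omegaMatrix, of_apply, if_pos rfl]
  exact (hQ i).inv.posSemidef.trace_mul_mul_mul_self_le hD.inv.posSemidef
    ((hQ i).inv_le_inv (hC i) (hQC i)) (hD₀.inv_le_inv hD hD₀D) (hR i).isHermitian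

theorem inv_pilotObsCov_mul [Fintype m] [DecidableEq ι] (hR : ∀ k, (R k).PosSemidef)
    {π : ι → γ} (hRR : ∀ i j, i ≠ j → π i = π j → R i * R j = 0) {c : ℝ} (hc : 0 < c)
    (k : ι) :
    (pilotObsCov R π c (π k))⁻¹ * R k = (R k + (c : ℂ) • 1)⁻¹ * R k := by
  have := (posDef_pilotObsCov hR π hc (π k)).isUnit.invertible
  have := ((hR k).posDef_add_smul_one hc).isUnit.invertible
  refine inv_mul_eq_inv_mul_of_sub_mul_eq_zero (commute_add_smul_one_self (R k) c) ?_
  rw [pilotObsCov_sub_add_smul_one, Finset.sum_mul]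
  refine Finset.sum_eq_zero fun ℓ hℓ => hRR ℓ k (Finset.ne_of_mem_erase hℓ) ?_
  exact (Finset.mem_filter.mp (Finset.mem_of_mem_erase hℓ)).2

theorem mul_inv_pilotObsCov_mul_eq_zero [Fintype m] [DecidableEq ι] (hR : ∀ k, (R k).PosSemidef)
    {π : ι → γ} (hRR : ∀ i j, i ≠ j → π i = π j → R i * R j = 0) {c : ℝ} (hc : 0 < c)
    {ℓ k : ι} (hℓk : ℓ ≠ k) (hπ : π ℓ = π k) : R ℓ * ((pilotObsCov R π c (π k))⁻¹ * R k) = 0 := by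
  rw [inv_pilotObsCov_mul hR hRR hc, (commute_add_smul_one_self (R k) c).nonsing_inv_left.eq,
    ← Matrix.mul_assoc, hRR ℓ k hℓk hπ, Matrix.zero_mul]

theorem omegaMatrix_eq_diagonal [Fintype m] [DecidableEq ι] (hR : ∀ k, (R k).PosSemidef)
    {π : ι → γ} (hRR : ∀ i j, i ≠ j → π i = π j → R i * R j = 0) {c : ℝ} (hc : 0 < c)
    (σ : ℝ) :
    omegaMatrix R π c σ = diagonal fun i => ((R i + (c : ℂ) • 1)⁻¹ * R i *
      (effNoiseCov R (fun k => R k + (c : ℂ) • 1) σ)⁻¹ * R i).trace := by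
  have hCR := inv_pilotObsCov_mul hR hRR hc
  have hD : effNoiseCov R (fun k => pilotObsCov R π c (π k)) σ =
      effNoiseCov R (fun k => R k + (c : ℂ) • 1) σ := by
    simp only [effNoiseCov, Matrix.mul_assoc, hCR]
  ext i j
  rw [omegaMatrix, of_apply]
  rcases eq_or_ne i j with rfl | hij
  · rw [if_pos rfl, diagonal_apply_eq, hCR, hD]
  · rw [diagonal_apply_ne _ hij, ite_eq_right_iff]
    intro hπ
    rw [trace_mul_comm, ← Matrix.mul_assoc,
      mul_inv_pilotObsCov_mul_eq_zero hR hRR hc hij.symm hπ.symm, Matrix.zero_mul, trace_zero]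

end PilotContamination

/-- **Theorem 4.** For channel covariances `R k` (Hermitian PSD), training SNR `ρp > 0`, pilot
length `τ > 0`, data SNR `ρt > 0`, `c = 1/(ρp τ)` and a pilot assignment `π`, with
`C k = ∑_{ℓ : π ℓ = π k} R ℓ + c I`,
`D = ∑ k (R k − R k (C k)⁻¹ R k) + (1/ρt) I`,
`Ω i j = trace ((C i)⁻¹ R i D⁻¹ R j) δ(π i − π j)` and
`ω i = trace ((R i + c I)⁻¹ R i (∑ k (R k − R k (R k + c I)⁻¹ R k) + (1/ρt) I)⁻¹ R i)`:
the matrix `Ω` is Hermitian positive semidefinite and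
`trace ((I + Ω)⁻¹) ≥ ∑ i, 1/(1 + ω i)`, with equality when `trace (R i * R j) = 0` for all
`i ≠ j` with `π i = π j`. -/
theorem mse_sd_lower_bound_and_optimality
    {M K τ' : ℕ} (R : Fin K → Matrix (Fin M) (Fin M) ℂ)
    (hR : ∀ k, (R k).PosSemidef)
    (ρp τ ρt : ℝ) (hρp : 0 < ρp) (hτ : 0 < τ) (hρt : 0 < ρt)
    (c : ℝ) (hc : c = 1 / (ρp * τ))
    (π : Fin K → Fin τ')
    (C : Fin K → Matrix (Fin M) (Fin M) ℂ)
    (hC : ∀ k, C k = ∑ ℓ ∈ Finset.univ.filter (fun ℓ => π ℓ = π k), R ℓ +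
      (c : ℂ) • (1 : Matrix (Fin M) (Fin M) ℂ))
    (D : Matrix (Fin M) (Fin M) ℂ)
    (hD : D = ∑ k, (R k - R k * (C k)⁻¹ * R k) +
      ((1 / ρt : ℝ) : ℂ) • (1 : Matrix (Fin M) (Fin M) ℂ))
    (Om : Matrix (Fin K) (Fin K) ℂ)
    (hOm : ∀ i j, Om i j =
      if π i = π j then ((C i)⁻¹ * R i * D⁻¹ * R j).trace else 0)
    (ω : Fin K → ℂ)
    (hω : ∀ i, ω i =
      ((R i + (c : ℂ) • (1 : Matrix (Fin M) (Fin M) ℂ))⁻¹ * R i *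
        (∑ k, (R k - R k * (R k + (c : ℂ) • (1 : Matrix (Fin M) (Fin M) ℂ))⁻¹ * R k) +
          ((1 / ρt : ℝ) : ℂ) • (1 : Matrix (Fin M) (Fin M) ℂ))⁻¹ * R i).trace) :
    Om.PosSemidef ∧
    ((1 + Om)⁻¹).trace ≥ ∑ i, 1 / (1 + ω i) ∧
    ((∀ i j : Fin K, i ≠ j → π i = π j → (R i * R j).trace = 0) →
      ((1 + Om)⁻¹).trace = ∑ i, 1 / (1 + ω i)) := by
  have hc0 : 0 < c := by rw [hc]; positivity
  have hσ : 0 < 1 / ρt := by positivity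
  obtain rfl : C = fun k => pilotObsCov R π c (π k) := funext hC
  subst hD
  obtain rfl : Om = omegaMatrix R π c (1 / ρt) := Matrix.ext hOm
  obtain rfl : ω = fun i => ((R i + (c : ℂ) • 1)⁻¹ * R i *
      (effNoiseCov R (fun k => R k + (c : ℂ) • 1) (1 / ρt))⁻¹ * R i).trace := funext hω
  have hΩ := posSemidef_omegaMatrix hR π hc0 hσ
  refine ⟨hΩ, hΩ.sum_one_div_one_add_le_trace_inv (omegaMatrix_apply_self_le hR π hc0 hσ),
    fun horth => ?_⟩
  have hRR i j (hij : i ≠ j) (hπ : π i = π j) : R i * R j = 0 :=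
    (hR i).mul_eq_zero_of_trace_mul_eq_zero (hR j) (horth i j hij hπ)
  have hdiag := omegaMatrix_eq_diagonal hR hRR hc0 (1 / ρt)
  have hω0 := posSemidef_diagonal_iff.mp (hdiag ▸ hΩ)
  rw [hdiag, trace_inv_one_add_diagonal fun i => (add_pos_of_pos_of_nonneg one_pos (hω0 i)).ne']
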